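/- arXiv:2309.10595 — 2 statements merged into one kernel-verified Lean document; each statement's English description precedes it below -/
import Mathlib

section
/- Suppose q ∼ D_a(k, λ) with a ≠ 0, λ ≠ 0, k ≥ 1, i.e. q(z,ζ) = (z+aζ)^k h(z,ζ) with h(−a,1) = λ ≠ 0, and let Q := q ∂_z∂_ζ q − (∂_z q)(∂_ζ q). Then Q ∼ D_a(2k−2, −a k λ²), i.e. Q(z,ζ) = (z+aζ)^{2k−2} H(z,ζ) for a polynomial H with H(−a,1) = −a k λ². -/
open MvPolynomial

/-- if `q = (z+aζ)^k h` with `h(-a,1) = λ ≠ 0`, `a ≠ 0`, `k ≥ 1`, and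
`Q := q ∂_z∂_ζ q - (∂_z q)(∂_ζ q)`, then `Q = (z+aζ)^{2k-2} H` for a polynomial `H`
with `H(-a,1) = -a·k·λ²`. -/
theorem Q_divisibility (a l : ℂ) (k : ℕ) (q h : MvPolynomial (Fin 2) ℂ)
    (ha : a ≠ 0) (hk : 1 ≤ k) (hl : l ≠ 0)
    (hq : q = (X 0 + C a * X 1) ^ k * h)
    (heval : eval ![-a, 1] h = l) :
    ∃ H : MvPolynomial (Fin 2) ℂ,
      q * pderiv 0 (pderiv 1 q) - pderiv 0 q * pderiv 1 q
        = (X 0 + C a * X 1) ^ (2 * k - 2) * H ∧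
      eval ![-a, 1] H = -(a * (k : ℂ) * l ^ 2) := by
  obtain ⟨m, rfl⟩ : ∃ m, k = m + 1 := ⟨k - 1, (Nat.succ_pred_eq_of_pos hk).symm⟩
  set L : MvPolynomial (Fin 2) ℂ := X 0 + C a * X 1 with hL
  have hL0 : pderiv 0 L = 1 := by simp [hL, pderiv_C_mul]
  have hL1 : pderiv 1 L = C a := by simp [hL, pderiv_C_mul]
  have t0 : pderiv 0 (L ^ m) * L = (m : MvPolynomial (Fin 2) ℂ) * L ^ m := by
    rw [pderiv_pow, hL0]
    cases m with
    | zero => simp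
    | succ n => simp only [Nat.add_sub_cancel]; push_cast; ring
  have t1 : pderiv 1 (L ^ m) * L = C a * ((m : MvPolynomial (Fin 2) ℂ) * L ^ m) := by
    rw [pderiv_pow, hL1]
    cases m with
    | zero => simp
    | succ n => simp only [Nat.add_sub_cancel]; push_cast; ring
  have s0 : pderiv 0 (L ^ (m + 1)) = ((m : MvPolynomial (Fin 2) ℂ) + 1) * L ^ m := by
    rw [pow_succ, pderiv_mul, hL0, t0]; ring
  have s1 : pderiv 1 (L ^ (m + 1)) = C a * (((m : MvPolynomial (Fin 2) ℂ) + 1) * L ^ m) := by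
    rw [pow_succ, pderiv_mul, hL1, t1]; ring
  have hcast : pderiv (R := ℂ) 0 ((m : MvPolynomial (Fin 2) ℂ) + 1) = 0 := by
    rw [show ((m : MvPolynomial (Fin 2) ℂ) + 1) = C ((m : ℂ) + 1) by
        push_cast [map_natCast, map_add, map_one]; ring,
      pderiv_C]
  have d0 : pderiv 0 q = ((m : MvPolynomial (Fin 2) ℂ) + 1) * L ^ m * h
      + L ^ (m + 1) * pderiv 0 h := by
    rw [hq, pderiv_mul, s0]
  have d1 : pderiv 1 q = C a * (((m : MvPolynomial (Fin 2) ℂ) + 1) * L ^ m) * h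
      + L ^ (m + 1) * pderiv 1 h := by
    rw [hq, pderiv_mul, s1]
  have d01 : pderiv 0 (pderiv 1 q) =
      C a * (((m : MvPolynomial (Fin 2) ℂ) + 1) * (pderiv 0 (L ^ m) * h + L ^ m * pderiv 0 h))
      + (((m : MvPolynomial (Fin 2) ℂ) + 1) * L ^ m * pderiv 1 h
        + L ^ (m + 1) * pderiv 0 (pderiv 1 h)) := by
    rw [d1]
    simp only [map_add, pderiv_mul, pderiv_C_mul, pderiv_C, s0, hcast]
    ring
  refine ⟨-(C a * ((m : MvPolynomial (Fin 2) ℂ) + 1)) * h ^ 2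
      + L ^ 2 * (h * pderiv 0 (pderiv 1 h) - pderiv 0 h * pderiv 1 h), ?_, ?_⟩
  · have hexp : 2 * (m + 1) - 2 = 2 * m := by omega
    rw [hexp, d01, d0, d1, hq]
    linear_combination (C a * ((m : MvPolynomial (Fin 2) ℂ) + 1) * h ^ 2 * L ^ m) * t0
  · have hLe : eval ![-a, 1] L = 0 := by simp [hL]
    simp [hLe, heval]
end

section
/- For an integer s ≥ 1 and y > 0, the series F₀(y) := Σ_{α=s}^{∞} y^{(α+1)/s − 1} / Γ((α+1)/s) has the closed form F₀(y) = e^y · Σ_{α=0}^{s−1} [Γ((α+1)/s) − Γ((α+1)/s, y)] / Γ((α+1)/s), where Γ(a,u) := ∫_u^∞ t^{a−1} e^{−t} dt is the upper incomplete Gamma function. -/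
open Real MeasureTheory

/-- The upper incomplete Gamma function `Γ(a, u) = ∫_u^∞ t^{a−1} e^{−t} dt`. -/
noncomputable def upperIncGamma (a u : ℝ) : ℝ :=
  ∫ t in Set.Ioi u, t ^ (a - 1) * Real.exp (-t)

/-- `F₀(y) = Σ_{α=s}^∞ y^{(α+1)/s − 1} / Γ((α+1)/s)`, written as a sum over `n = α − s`. -/
noncomputable def F0 (s : ℕ) (y : ℝ) : ℝ :=
  ∑' n : ℕ, y ^ (((n : ℝ) + s + 1) / s - 1) / Real.Gamma (((n : ℝ) + s + 1) / s)

open Set Filter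

/-- The lower incomplete Gamma function as an integral over `Ioc 0 y`. -/
noncomputable def lowerP (a y : ℝ) : ℝ :=
  ∫ t in Set.Ioc 0 y, t ^ (a - 1) * Real.exp (-t)

lemma integrableOn_gamma {a : ℝ} (ha : 0 < a) :
    IntegrableOn (fun t : ℝ => t ^ (a - 1) * Real.exp (-t)) (Set.Ioi 0) := by
  have := Real.GammaIntegral_convergent ha
  simpa [mul_comm] using this

lemma Gamma_split {a : ℝ} (ha : 0 < a) {y : ℝ} (hy : 0 < y) :
    Real.Gamma a = lowerP a y + upperIncGamma a y := by
  rw [Real.Gamma_eq_integral ha]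
  have h1 : IntegrableOn (fun t : ℝ => t ^ (a - 1) * Real.exp (-t)) (Set.Ioc 0 y) :=
    (integrableOn_gamma ha).mono_set Ioc_subset_Ioi_self
  have h2 : IntegrableOn (fun t : ℝ => t ^ (a - 1) * Real.exp (-t)) (Set.Ioi y) :=
    (integrableOn_gamma ha).mono_set (Ioi_subset_Ioi hy.le)
  have hu : Set.Ioc 0 y ∪ Set.Ioi y = Set.Ioi (0:ℝ) := Ioc_union_Ioi_eq_Ioi hy.le
  calc ∫ x in Ioi 0, Real.exp (-x) * x ^ (a - 1)
      = ∫ t in Ioi 0, t ^ (a - 1) * Real.exp (-t) := by simp_rw [mul_comm]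
    _ = lowerP a y + upperIncGamma a y := by
        rw [← hu, setIntegral_union (Ioc_disjoint_Ioi le_rfl) measurableSet_Ioi h1 h2]
        rfl

lemma lowerP_complex {a : ℝ} (ha : 0 < a) {y : ℝ} (hy : 0 ≤ y) :
    Complex.partialGamma (a : ℂ) y = ((lowerP a y : ℝ) : ℂ) := by
  rw [Complex.partialGamma, intervalIntegral.integral_of_le hy]
  rw [show ((lowerP a y : ℝ) : ℂ) = ∫ t in Set.Ioc (0:ℝ) y, ((t ^ (a - 1) * Real.exp (-t) : ℝ) : ℂ)
    from (integral_ofReal).symm]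
  refine setIntegral_congr_fun measurableSet_Ioc (fun x hx => ?_)
  have hx0 : 0 < x := hx.1
  rw [Complex.ofReal_mul, Complex.ofReal_cpow hx0.le]
  push_cast
  ring

lemma lowerP_rec {a : ℝ} (ha : 0 < a) {y : ℝ} (hy : 0 ≤ y) :
    lowerP (a + 1) y = a * lowerP a y - Real.exp (-y) * y ^ a := by
  have hre : 0 < (a : ℂ).re := by simpa using ha
  have h := Complex.partialGamma_add_one hre hy
  rw [show ((a:ℂ) + 1) = (((a + 1 : ℝ)):ℂ) by push_cast; ring] at h
  rw [lowerP_complex (by linarith) hy, lowerP_complex ha hy] at h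
  have hyc : ((y:ℂ) ^ (a:ℂ)) = ((y ^ a : ℝ) : ℂ) := (Complex.ofReal_cpow hy _).symm
  rw [hyc] at h
  exact_mod_cast h

lemma lowerP_nonneg {a y : ℝ} : 0 ≤ lowerP a y := by
  refine setIntegral_nonneg measurableSet_Ioc (fun t ht => ?_)
  exact mul_nonneg (Real.rpow_nonneg ht.1.le _) (Real.exp_nonneg _)

lemma lowerP_le {a : ℝ} (ha : 0 < a) {y : ℝ} (hy : 0 < y) :
    lowerP a y ≤ y ^ a / a := by
  have hint : ∫ t in Set.Ioc (0:ℝ) y, t ^ (a - 1) = y ^ a / a := by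
    rw [← intervalIntegral.integral_of_le hy.le]
    rw [integral_rpow (Or.inl (by linarith))]
    rw [sub_add_cancel, Real.zero_rpow ha.ne']
    ring
  have hib : IntegrableOn (fun t : ℝ => t ^ (a - 1)) (Set.Ioc 0 y) := by
    rw [← intervalIntegrable_iff_integrableOn_Ioc_of_le hy.le]
    apply intervalIntegral.intervalIntegrable_rpow'
    linarith
  rw [← hint]
  refine setIntegral_mono_on ?_ hib measurableSet_Ioc (fun t ht => ?_)
  · exact ((integrableOn_gamma ha).mono_set Ioc_subset_Ioi_self)
  · have h1 : 0 < t := ht.1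
    nth_rewrite 2 [← mul_one (t ^ (a-1))]
    exact mul_le_mul_of_nonneg_left (by rw [Real.exp_le_one_iff]; linarith)
      (Real.rpow_nonneg h1.le _)

lemma hasSum_lower {a : ℝ} (ha : 0 < a) {y : ℝ} (hy : 0 < y) :
    HasSum (fun k : ℕ => y ^ (a + k) / Real.Gamma (a + k + 1))
      (Real.exp y * (lowerP a y / Real.Gamma a)) := by
  set T : ℕ → ℝ := fun k => y ^ (a + k) / Real.Gamma (a + k + 1) with hT
  set Q : ℕ → ℝ := fun n => lowerP (a + n) y / Real.Gamma (a + n) with hQ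
  have hpos : ∀ n : ℕ, (0:ℝ) < a + n := fun n => by positivity
  have hGpos : ∀ n : ℕ, 0 < Real.Gamma (a + n) := fun n => Real.Gamma_pos_of_pos (hpos n)
  have hGrec : ∀ n : ℕ, Real.Gamma (a + n + 1) = (a + n) * Real.Gamma (a + n) :=
    fun n => Real.Gamma_add_one (hpos n).ne'
  have hcast : ∀ n : ℕ, a + ((n:ℝ) + 1) = (a + n) + 1 := fun n => by ring
  have hQrec : ∀ n : ℕ, Q (n + 1) = Q n - Real.exp (-y) * T n := by
    intro n
    simp only [hQ, hT]
    push_cast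
    rw [hcast n, lowerP_rec (hpos n) hy.le, hGrec n]
    have h3 := (hpos n).ne'
    have h4 := (hGpos n).ne'
    field_simp
  have hTnonneg : ∀ n, 0 ≤ T n := by
    intro n
    have := Real.Gamma_pos_of_pos (show (0:ℝ) < a + n + 1 by positivity)
    exact div_nonneg (Real.rpow_nonneg hy.le _) this.le
  have hTrec : ∀ n : ℕ, T (n + 1) = (y / (a + n + 1)) * T n := by
    intro n
    have h1 : y ^ (a + ((n:ℝ)+1)) = y ^ (a + n) * y := by
      rw [show a + ((n:ℝ)+1) = (a + n) + 1 by ring, Real.rpow_add_one hy.ne']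
    have h2 : Real.Gamma (a + ((n:ℝ)+1) + 1) = (a + n + 1) * Real.Gamma (a + n + 1) := by
      rw [show a + ((n:ℝ)+1) + 1 = (a + n + 1) + 1 by ring]
      exact Real.Gamma_add_one (by positivity)
    simp only [hT]
    push_cast
    rw [h1, h2]
    have := (Real.Gamma_pos_of_pos (show (0:ℝ) < a + n + 1 by positivity)).ne'
    field_simp
  have hTsum : Summable T := by
    refine summable_of_ratio_norm_eventually_le (r := 1/2) (by norm_num) ?_
    filter_upwards [eventually_ge_atTop ⌈2*y⌉₊] with n hn
    have hny : 2*y ≤ (n:ℝ) := le_trans (Nat.le_ceil _) (by exact_mod_cast hn)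
    rw [Real.norm_eq_abs, Real.norm_eq_abs, abs_of_nonneg (hTnonneg _), abs_of_nonneg (hTnonneg _),
      hTrec n]
    have hb : y / (a + n + 1) ≤ 1/2 := by
      rw [div_le_div_iff₀ (by positivity) (by norm_num)]
      linarith
    exact mul_le_mul_of_nonneg_right hb (hTnonneg n)
  have hQnonneg : ∀ n, 0 ≤ Q n := fun n => div_nonneg lowerP_nonneg (hGpos n).le
  have hQle : ∀ n, Q n ≤ T n := by
    intro n
    simp only [hQ, hT]
    rw [hGrec n]
    rw [div_le_div_iff₀ (hGpos n) (by positivity)]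
    calc lowerP (a + n) y * ((a + n) * Real.Gamma (a + n))
        ≤ (y ^ (a+n) / (a+n)) * ((a + n) * Real.Gamma (a + n)) := by
          exact mul_le_mul_of_nonneg_right (lowerP_le (hpos n) hy) (by positivity)
      _ = y ^ (a + n) * Real.Gamma (a + n) := by
          field_simp
  have hQ0 : Tendsto Q atTop (nhds 0) :=
    squeeze_zero hQnonneg hQle hTsum.tendsto_atTop_zero
  have htel : ∀ n : ℕ, ∑ k ∈ Finset.range n, T k = Real.exp y * (Q 0 - Q n) := by
    intro n
    induction n with
    | zero => simp
    | succ m ih =>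
      rw [Finset.sum_range_succ, ih, hQrec m]
      have hE : Real.exp y * Real.exp (-y) = 1 := by
        rw [← Real.exp_add]; simp
      linear_combination (-(T m)) * hE
  have hQ0val : Q 0 = lowerP a y / Real.Gamma a := by simp [hQ]
  rw [hasSum_iff_tendsto_nat_of_nonneg hTnonneg]
  simp_rw [htel]
  rw [← hQ0val]
  have := (tendsto_const_nhds (x := Q 0) (f := atTop (α := ℕ))).sub hQ0
  have h2 := this.const_mul (Real.exp y)
  simpa using h2

/-- closed form
`F₀(y) = e^y Σ_{α=0}^{s−1} [Γ((α+1)/s) − Γ((α+1)/s, y)]/Γ((α+1)/s)` for `y > 0`. -/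
theorem F0_closed_form (s : ℕ) (hs : 1 ≤ s) (y : ℝ) (hy : 0 < y) :
    F0 s y = Real.exp y * ∑ α ∈ Finset.range s,
      (Real.Gamma (((α : ℝ) + 1) / s) - upperIncGamma (((α : ℝ) + 1) / s) y) /
        Real.Gamma (((α : ℝ) + 1) / s) := by
  haveI : NeZero s := ⟨by omega⟩
  have hs0 : (s:ℝ) ≠ 0 := Nat.cast_ne_zero.mpr (by omega)
  have hs0' : (0:ℝ) < s := by positivity
  have hapos : ∀ α : Fin s, 0 < ((α:ℝ) + 1) / s := fun α => by positivity
  have hkey : ∀ α : Fin s, HasSum (fun k : ℕ => y ^ (((α:ℝ) + 1) / s + k) /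
      Real.Gamma (((α:ℝ) + 1) / s + k + 1))
      (Real.exp y * ((Real.Gamma (((α:ℝ) + 1) / s) - upperIncGamma (((α:ℝ) + 1) / s) y) /
        Real.Gamma (((α:ℝ) + 1) / s))) := by
    intro α
    have h := hasSum_lower (hapos α) hy
    rwa [show lowerP (((α:ℝ) + 1) / s) y
        = Real.Gamma (((α:ℝ) + 1) / s) - upperIncGamma (((α:ℝ) + 1) / s) y by
      rw [Gamma_split (hapos α) hy]; ring] at h
  set g : ℕ × Fin s → ℝ := fun p =>
    y ^ (((p.2:ℝ) + 1) / s + p.1) / Real.Gamma (((p.2:ℝ) + 1) / s + p.1 + 1) with hg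
  have hgnonneg : 0 ≤ g := fun p => div_nonneg (Real.rpow_nonneg hy.le _)
    (Real.Gamma_pos_of_pos (by positivity)).le
  have hgsum : Summable g := by
    rw [summable_prod_of_nonneg hgnonneg]
    refine ⟨fun k => ?_, ?_⟩
    · exact Summable.of_finite
    · simp_rw [tsum_fintype]
      exact summable_sum (fun β _ => (hkey β).summable)
  have hF : F0 s y = ∑' p : ℕ × Fin s, g p := by
    rw [F0, ← Equiv.tsum_eq (Nat.divModEquiv s).symm]
    congr 1
    funext p
    obtain ⟨k, β⟩ := p
    simp only [Nat.divModEquiv_symm_apply, hg]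
    have h1 : ((↑(k * s + (β:ℕ)) : ℝ) + s + 1) / s - 1 = ((β:ℝ) + 1) / s + k := by
      push_cast; field_simp; ring
    have h2 : ((↑(k * s + (β:ℕ)) : ℝ) + s + 1) / s = ((β:ℝ) + 1) / s + k + 1 := by
      push_cast; field_simp; ring
    rw [h1, h2]
  rw [hF, Summable.tsum_prod' hgsum (fun b => Summable.of_finite)]
  simp_rw [tsum_fintype]
  rw [Summable.tsum_finsetSum (fun β _ => (hkey β).summable)]
  rw [Finset.sum_congr rfl (fun β _ => (hkey β).tsum_eq), ← Finset.mul_sum]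
  rw [Fin.sum_univ_eq_sum_range (fun α : ℕ =>
    (Real.Gamma (((α : ℝ) + 1) / s) - upperIncGamma (((α : ℝ) + 1) / s) y) /
      Real.Gamma (((α : ℝ) + 1) / s))]
end
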